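/- arXiv:alg-geom/9606019 — 3 statements merged into one kernel-verified Lean document; each statement's English description precedes it below -/
import Mathlib

section
/- For every real number x with 0 < x < 1/4, one has Σ_{n≥0} (catalan n) · x^{n+1} = (1 - √(1-4x))/2. -/
/-!
The series `S = ∑ Cₙ xⁿ⁺¹` converges for `|x| < 1/4` because `Cₙ ≤ 4ⁿ`, and the Cauchy product
together with Segner's recurrence `Cₙ₊₁ = ∑_{i+j=n} Cᵢ Cⱼ` gives `S = x + S²`. So `S` is one of
the two roots `(1 ± √(1 - 4x))/2`. For `0 ≤ x` the same recurrence shows, by induction, that every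
partial sum stays below the smaller root `L`, since `t ↦ x + t²` is monotone on `[0, ∞)` and fixes
`L`; hence `S ≤ L < 1/2`, which rules out the larger root.
-/

open Finset

theorem catalan_le_four_pow (n : ℕ) : catalan n ≤ 4 ^ n :=
  calc catalan n ≤ (n + 1) * catalan n := Nat.le_mul_of_pos_left _ n.succ_pos
    _ = n.centralBinom := succ_mul_catalan_eq_centralBinom n
    _ ≤ 4 ^ n := Nat.centralBinom_le_four_pow n

theorem sum_antidiagonal_catalan_mul_pow {R : Type*} [CommSemiring R] (x : R) (n : ℕ) :
    ∑ p ∈ antidiagonal n, (catalan p.1 * x ^ (p.1 + 1)) * (catalan p.2 * x ^ (p.2 + 1)) =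
      catalan (n + 1) * x ^ (n + 2) := by
  rw [catalan_succ', Nat.cast_sum, sum_mul]
  refine sum_congr rfl fun p hp => ?_
  rw [HasAntidiagonal.mem_antidiagonal] at hp
  rw [mul_mul_mul_comm, ← pow_add, Nat.cast_mul, show p.1 + 1 + (p.2 + 1) = n + 2 by omega]

theorem sum_range_sum_antidiagonal_le_sq {R : Type*} [CommSemiring R] [PartialOrder R]
    [IsOrderedRing R] {g : ℕ → R} (hg : ∀ n, 0 ≤ g n) (N : ℕ) :
    ∑ m ∈ range N, ∑ p ∈ antidiagonal m, g p.1 * g p.2 ≤ (∑ n ∈ range N, g n) ^ 2 := by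
  rw [sq, sum_mul_sum, ← sum_product', ← sum_biUnion]
  · refine sum_le_sum_of_subset_of_nonneg (fun p hp => ?_) fun p _ _ => mul_nonneg (hg _) (hg _)
    simp only [mem_biUnion, mem_range, HasAntidiagonal.mem_antidiagonal] at hp
    simp only [mem_product, mem_range]
    omega
  · intro a _ b _ hab
    simp only [Function.onFun, disjoint_left, HasAntidiagonal.mem_antidiagonal]
    exact fun p hpa hpb => hab (hpa.symm.trans hpb)

section NormedField

variable {𝕜 : Type*} [NormedField 𝕜] {x : 𝕜}

theorem summable_norm_catalan_mul_pow (hx : ‖x‖ < 1 / 4) :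
    Summable fun n => ‖(catalan n : 𝕜) * x ^ (n + 1)‖ := by
  refine .of_nonneg_of_le (fun _ => norm_nonneg _) (fun n => ?_)
    ((summable_geometric_of_lt_one (r := 4 * ‖x‖) (by positivity) (by linarith)).mul_left ‖x‖)
  calc ‖(catalan n : 𝕜) * x ^ (n + 1)‖ = ‖(catalan n : 𝕜)‖ * ‖x‖ ^ (n + 1) := by
        rw [norm_mul, norm_pow]
    _ ≤ 4 ^ n * ‖x‖ ^ (n + 1) := by
        gcongr
        calc ‖(catalan n : 𝕜)‖ ≤ catalan n := by simpa using Nat.norm_cast_le (α := 𝕜) (catalan n)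
          _ ≤ 4 ^ n := by exact_mod_cast catalan_le_four_pow n
    _ = ‖x‖ * (4 * ‖x‖) ^ n := by ring

theorem tsum_catalan_mul_pow_eq_add_sq [CompleteSpace 𝕜] (hx : ‖x‖ < 1 / 4) :
    ∑' n, (catalan n : 𝕜) * x ^ (n + 1) = x + (∑' n, (catalan n : 𝕜) * x ^ (n + 1)) ^ 2 := by
  have hnorm := summable_norm_catalan_mul_pow hx
  rw [sq, tsum_mul_tsum_eq_tsum_sum_antidiagonal_of_summable_norm hnorm hnorm,
    hnorm.of_norm.tsum_eq_zero_add]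
  simp [sum_antidiagonal_catalan_mul_pow]

end NormedField

section Real

variable {x L : ℝ}

theorem sum_range_catalan_mul_pow_le (hx : 0 ≤ x) (hxL : x + L ^ 2 ≤ L) (N : ℕ) :
    ∑ n ∈ range N, (catalan n : ℝ) * x ^ (n + 1) ≤ L := by
  induction N with
  | zero => rw [sum_range_zero]; nlinarith
  | succ N ih =>
    have hterm_nonneg : ∀ n, 0 ≤ (catalan n : ℝ) * x ^ (n + 1) := fun n => by positivity
    calc ∑ n ∈ range (N + 1), (catalan n : ℝ) * x ^ (n + 1)
        = x + ∑ m ∈ range N, ∑ p ∈ antidiagonal m,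
            (catalan p.1 * x ^ (p.1 + 1)) * (catalan p.2 * x ^ (p.2 + 1)) := by
          rw [sum_range_succ', add_comm]
          simp [sum_antidiagonal_catalan_mul_pow]
      _ ≤ x + (∑ n ∈ range N, (catalan n : ℝ) * x ^ (n + 1)) ^ 2 := by
          gcongr; exact sum_range_sum_antidiagonal_le_sq hterm_nonneg N
      _ ≤ x + L ^ 2 := by gcongr
      _ ≤ L := hxL

theorem tsum_catalan_mul_pow_le (hx : 0 ≤ x) (hxL : x + L ^ 2 ≤ L) :
    ∑' n, (catalan n : ℝ) * x ^ (n + 1) ≤ L :=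
  Real.tsum_le_of_sum_range_le (fun n => by positivity) (sum_range_catalan_mul_pow_le hx hxL)

end Real

theorem catalan_generating_function_closed_form (x : ℝ) (hx0 : 0 < x) (hx : x < 1 / 4) :
    ∑' n : ℕ, (catalan n : ℝ) * x ^ (n + 1) = (1 - Real.sqrt (1 - 4 * x)) / 2 := by
  set S := ∑' n : ℕ, (catalan n : ℝ) * x ^ (n + 1)
  set s := Real.sqrt (1 - 4 * x)
  have hs_sq : s ^ 2 = 1 - 4 * x := Real.sq_sqrt (by linarith)
  have hs_pos : 0 < s := Real.sqrt_pos.mpr (by linarith)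
  have hS_root : S = x + S ^ 2 :=
    tsum_catalan_mul_pow_eq_add_sq (by rwa [Real.norm_of_nonneg hx0.le])
  have hS_le : S ≤ (1 - s) / 2 :=
    tsum_catalan_mul_pow_le hx0.le (by nlinarith)
  have hroots : (S - (1 - s) / 2) * (S - (1 + s) / 2) = 0 := by nlinarith
  rcases mul_eq_zero.mp hroots with h | h <;> linarith
end

section
/- Let ε, C > 0 be real numbers with 4ε < C, and let b : ℕ → ℝ be a nonnegative sequence satisfying b 0 ≤ ε and, for all n ≥ 1, b n ≤ C⁻¹ · Σ_{k=0}^{n-1} (b k) · (b (n-1-k)). Then the series Σ_{n} b n is summable. -/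
/-!
The sequence `c n = catalan n * ε ^ (n + 1) * C⁻¹ ^ n` satisfies the recursion with equality
(Segner's recurrence for the Catalan numbers), so strong induction gives `b ≤ c`. Since
`catalan n ≤ 4 ^ n`, `c n ≤ ε * (4 * ε / C) ^ n`, a convergent geometric series.
-/

open Finset

section ConvolutionRecursion

variable {r : ℝ} {b c : ℕ → ℝ}

theorem le_of_convolution_le (hr : 0 ≤ r) (hb : ∀ n, 0 ≤ b n) (h0 : b 0 ≤ c 0)
    (hb_rec : ∀ n, b (n + 1) ≤ r * ∑ p ∈ antidiagonal n, b p.1 * b p.2)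
    (hc_rec : ∀ n, c (n + 1) = r * ∑ p ∈ antidiagonal n, c p.1 * c p.2) (n : ℕ) :
    b n ≤ c n := by
  induction n using Nat.strong_induction_on with
  | _ n ih =>
    cases n with
    | zero => exact h0
    | succ m =>
      have hterm : ∀ p ∈ antidiagonal m, b p.1 * b p.2 ≤ c p.1 * c p.2 := by
        intro p hp
        have h1 := ih p.1 (by linarith [mem_antidiagonal.mp hp])
        have h2 := ih p.2 (by linarith [mem_antidiagonal.mp hp])
        exact mul_le_mul h1 h2 (hb _) ((hb _).trans h1)
      calc b (m + 1) ≤ r * ∑ p ∈ antidiagonal m, b p.1 * b p.2 := hb_rec m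
        _ ≤ r * ∑ p ∈ antidiagonal m, c p.1 * c p.2 :=
          mul_le_mul_of_nonneg_left (sum_le_sum hterm) hr
        _ = c (m + 1) := (hc_rec m).symm

end ConvolutionRecursion

theorem catalan_mul_pow_succ_eq_convolution (a r : ℝ) (n : ℕ) :
    catalan (n + 1) * a ^ (n + 2) * r ^ (n + 1) =
      r * ∑ p ∈ antidiagonal n,
        (catalan p.1 * a ^ (p.1 + 1) * r ^ p.1) * (catalan p.2 * a ^ (p.2 + 1) * r ^ p.2) := by
  have hterm : ∀ p ∈ antidiagonal n,
      (catalan p.1 * a ^ (p.1 + 1) * r ^ p.1) * (catalan p.2 * a ^ (p.2 + 1) * r ^ p.2) =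
        (catalan p.1 * catalan p.2 : ℕ) * (a ^ (n + 2) * r ^ n) := by
    intro p hp
    rw [← mem_antidiagonal.mp hp]
    push_cast
    ring
  rw [sum_congr rfl hterm, ← sum_mul, ← Nat.cast_sum, ← catalan_succ']
  ring

theorem catalan_mul_pow_le_geometric {a r : ℝ} (ha : 0 ≤ a) (hr : 0 ≤ r) (n : ℕ) :
    catalan n * a ^ (n + 1) * r ^ n ≤ a * (4 * a * r) ^ n := by
  have hcat : (catalan n : ℝ) ≤ 4 ^ n := by exact_mod_cast catalan_le_four_pow n
  calc (catalan n : ℝ) * a ^ (n + 1) * r ^ n ≤ 4 ^ n * a ^ (n + 1) * r ^ n := by gcongr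
    _ = a * (4 * a * r) ^ n := by ring

theorem summable_of_catalan_recursion_general (ε C : ℝ)
    (h4 : 4 * ε < C)
    (b : ℕ → ℝ) (hb : ∀ n, 0 ≤ b n) (hb0 : b 0 ≤ ε)
    (hrec : ∀ n, 1 ≤ n → b n ≤ C⁻¹ * ∑ k ∈ Finset.range n, b k * b (n - 1 - k)) :
    Summable b := by
  have hε : 0 ≤ ε := (hb 0).trans hb0
  have hC : 0 < C := by linarith
  have hr : 0 ≤ C⁻¹ := inv_nonneg.mpr hC.le
  have hb_rec (n : ℕ) : b (n + 1) ≤ C⁻¹ * ∑ p ∈ antidiagonal n, b p.1 * b p.2 := by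
    rw [Nat.sum_antidiagonal_eq_sum_range_succ (fun i j => b i * b j)]
    simpa using hrec (n + 1) le_add_self
  have hcatalan (n : ℕ) : b n ≤ catalan n * ε ^ (n + 1) * C⁻¹ ^ n :=
    le_of_convolution_le (c := fun n => catalan n * ε ^ (n + 1) * C⁻¹ ^ n) hr hb
      (by simpa using hb0) hb_rec
      (catalan_mul_pow_succ_eq_convolution ε C⁻¹) n
  have hratio : 4 * ε * C⁻¹ < 1 := by rw [← div_eq_mul_inv, div_lt_one hC]; exact h4
  refine Summable.of_nonneg_of_le hb
    (fun n => (hcatalan n).trans (catalan_mul_pow_le_geometric hε hr n))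
    ((summable_geometric_of_lt_one (by positivity) hratio).mul_left ε)

theorem summable_of_catalan_recursion (ε C : ℝ) (hε : 0 < ε) (hC : 0 < C)
    (h4 : 4 * ε < C)
    (b : ℕ → ℝ) (hb : ∀ n, 0 ≤ b n) (hb0 : b 0 ≤ ε)
    (hrec : ∀ n, 1 ≤ n → b n ≤ C⁻¹ * ∑ k ∈ Finset.range n, b k * b (n - 1 - k)) :
    Summable b :=
  summable_of_catalan_recursion_general ε C h4 b hb hb0 hrec
end

section
/- Let V be a module over the quaternions ℍ and let α be an ℝ-bilinear form on V (V viewed as a real vector space) satisfying α(i·x, i·y) = α(x,y) and α(j·x, j·y) = α(x,y) for all x, y ∈ V. Then α(q·x, q·y) = α(x,y) for every unit quaternion q (‖q‖ = 1) and all x, y ∈ V. -/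
/-!
Invariance under `i` and `j` gives invariance under `k = i * j`. An invariant `u` with `u² = -1`
is skew, `α (u x) y = -α x (u y)`, and for two anticommuting such `u`, `v` one gets
`α (u x) (v y) = -α (v x) (u y)`. Expanding `α (q x) (q y)` for `q = a + b i + c j + d k`, the
cross terms therefore cancel in pairs and the diagonal terms add up to
`(a² + b² + c² + d²) α x y = ‖q‖² α x y`.
-/

open scoped Quaternion

structure IsQuaternionPair {A : Type*} [Ring A] (i j : A) : Prop where
  mul_self_left : i * i = -1
  mul_self_right : j * j = -1
  mul_comm_neg : j * i = -(i * j)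

namespace IsQuaternionPair

variable {A : Type*} [Ring A] {i j : A}

theorem mul_mul_self (h : IsQuaternionPair i j) : i * j * (i * j) = -1 :=
  calc i * j * (i * j) = i * (j * i) * j := by noncomm_ring
    _ = -(i * i * (j * j)) := by rw [h.mul_comm_neg]; noncomm_ring
    _ = -1 := by rw [h.mul_self_left, h.mul_self_right]; norm_num

theorem mul_right (h : IsQuaternionPair i j) : IsQuaternionPair i (i * j) where
  mul_self_left := h.mul_self_left
  mul_self_right := h.mul_mul_self
  mul_comm_neg :=
    calc i * j * i = i * (j * i) := mul_assoc ..
      _ = -(i * (i * j)) := by rw [h.mul_comm_neg, mul_neg]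

theorem mul_left (h : IsQuaternionPair i j) : IsQuaternionPair j (i * j) where
  mul_self_left := h.mul_self_right
  mul_self_right := h.mul_mul_self
  mul_comm_neg :=
    calc i * j * j = -(-(i * j) * j) := by noncomm_ring
      _ = -(j * (i * j)) := by rw [← h.mul_comm_neg, mul_assoc]

end IsQuaternionPair

section InvariantForm

variable {A V M : Type*} [Ring A] [AddCommGroup V] [Module A V] [AddCommGroup M]
  (B : V →+ V →+ M) {u v : A}

def IsSMulInvariant (u : A) : Prop :=
  ∀ x y, B (u • x) (u • y) = B x y

variable {B}

theorem IsSMulInvariant.mul (hu : IsSMulInvariant B u) (hv : IsSMulInvariant B v) :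
    IsSMulInvariant B (u * v) := by
  intro x y
  rw [mul_smul, mul_smul, hu, hv]

theorem IsSMulInvariant.add_smul_right_eq_zero (hu : u * u = -1) (h : IsSMulInvariant B u)
    (x y : V) : B (u • x) y + B x (u • y) = 0 := by
  have h' := h x (u • y)
  rw [smul_smul, hu, neg_one_smul, map_neg] at h'
  rw [← h', add_neg_cancel]

theorem IsQuaternionPair.add_smul_swap_eq_zero (huv : IsQuaternionPair u v)
    (hu : IsSMulInvariant B u) (hv : IsSMulInvariant B v) (x y : V) :
    B (u • x) (v • y) + B (v • x) (u • y) = 0 := by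
  have h₁ := hu (u • x) (v • y)
  have h₂ := hv (v • x) (u • y)
  rw [smul_smul, smul_smul, huv.mul_self_left, neg_one_smul] at h₁
  rw [smul_smul, smul_smul, huv.mul_self_right, huv.mul_comm_neg, neg_one_smul, neg_smul] at h₂
  rw [← h₁, ← h₂, map_neg, map_neg, AddMonoidHom.neg_apply, neg_neg, neg_add_cancel]

end InvariantForm

theorem IsQuaternionPair.apply_smul_smul {R A V : Type*} [CommRing R] [Ring A] [Algebra R A]
    [AddCommGroup V] [Module A V] {B : V →+ V →+ R} {i j : A} (hij : IsQuaternionPair i j)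
    (hi : IsSMulInvariant B i) (hj : IsSMulInvariant B j)
    (hsmul_left : ∀ (r : R) x y, B (algebraMap R A r • x) y = r * B x y)
    (hsmul_right : ∀ (r : R) x y, B x (algebraMap R A r • y) = r * B x y) (a b c d : R)
    (q : A) (hq : q = algebraMap R A a + algebraMap R A b * i + algebraMap R A c * j
      + algebraMap R A d * (i * j)) (x y : V) :
    B (q • x) (q • y) = (a ^ 2 + b ^ 2 + c ^ 2 + d ^ 2) * B x y := by
  have hk := hi.mul hj
  have hik := hij.mul_right
  have hjk := hij.mul_left
  have hkk := hij.mul_mul_self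
  -- keep `k` atomic, so that `mul_smul` below does not split `k • x` into `i • j • x`
  generalize i * j = k at hq hk hik hjk hkk
  subst hq
  simp only [add_smul, mul_smul, map_add, AddMonoidHom.add_apply, hsmul_left, hsmul_right]
  linear_combination b ^ 2 * hi x y + c ^ 2 * hj x y + d ^ 2 * hk x y
    + a * b * hi.add_smul_right_eq_zero hij.mul_self_left x y
    + a * c * hj.add_smul_right_eq_zero hij.mul_self_right x y
    + a * d * hk.add_smul_right_eq_zero hkk x y
    + b * c * hij.add_smul_swap_eq_zero hi hj x y
    + b * d * hik.add_smul_swap_eq_zero hi hk x y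
    + c * d * hjk.add_smul_swap_eq_zero hj hk x y

namespace Quaternion

variable {R : Type*} [CommRing R] {i j : ℍ[R]}

theorem isQuaternionPair_of_eq (hi : i = ⟨0, 1, 0, 0⟩) (hj : j = ⟨0, 0, 1, 0⟩) :
    IsQuaternionPair i j := by
  constructor <;> ext <;> simp [re_mul, imI_mul, imJ_mul, imK_mul] <;> simp [hi, hj]

theorem eq_algebraMap_add_of_eq (hi : i = ⟨0, 1, 0, 0⟩) (hj : j = ⟨0, 0, 1, 0⟩) (q : ℍ[R]) :
    q = algebraMap R ℍ[R] q.re + algebraMap R ℍ[R] q.imI * i + algebraMap R ℍ[R] q.imJ * j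
      + algebraMap R ℍ[R] q.imK * (i * j) := by
  ext <;> simp [re_mul, imI_mul, imJ_mul, imK_mul, algebraMap_def] <;> simp [hi, hj]

end Quaternion

theorem unit_quaternion_invariance
    {V : Type*} [AddCommGroup V] [Module (Quaternion ℝ) V]
    (α : V → V → ℝ)
    (hadd1 : ∀ x x' y, α (x + x') y = α x y + α x' y)
    (hadd2 : ∀ x y y', α x (y + y') = α x y + α x y')
    (hsmul1 : ∀ (r : ℝ) (x y : V), α (((r : ℝ) : Quaternion ℝ) • x) y = r * α x y)
    (hsmul2 : ∀ (r : ℝ) (x y : V), α x (((r : ℝ) : Quaternion ℝ) • y) = r * α x y)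
    (i j : Quaternion ℝ) (hi : i = ⟨0, 1, 0, 0⟩) (hj : j = ⟨0, 0, 1, 0⟩)
    (hI : ∀ x y, α (i • x) (i • y) = α x y)
    (hJ : ∀ x y, α (j • x) (j • y) = α x y) :
    ∀ (q : Quaternion ℝ), ‖q‖ = 1 → ∀ x y, α (q • x) (q • y) = α x y := by
  intro q hq x y
  let B : V →+ V →+ ℝ :=
    AddMonoidHom.mk' (fun x ↦ AddMonoidHom.mk' (α x) (hadd2 x)) fun x x' ↦
      AddMonoidHom.ext (hadd1 x x')
  have hnorm : q.re ^ 2 + q.imI ^ 2 + q.imJ ^ 2 + q.imK ^ 2 = 1 := by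
    rw [← Quaternion.normSq_def', Quaternion.normSq_eq_norm_mul_self, hq, one_mul]
  have h := (Quaternion.isQuaternionPair_of_eq hi hj).apply_smul_smul (B := B) hI hJ
    (fun r ↦ by rw [Quaternion.algebraMap_def]; exact hsmul1 r)
    (fun r ↦ by rw [Quaternion.algebraMap_def]; exact hsmul2 r)
    q.re q.imI q.imJ q.imK q (Quaternion.eq_algebraMap_add_of_eq hi hj q) x y
  rwa [hnorm, one_mul] at h
end
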